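/- Suppose κ, ι, λ ∈ [-1,1] satisfy ι² ≤ min{1-λ², (1+κ)(1-λ), (1-κ)(1+λ)}. Then Θ_λ(z) ≥ 2ιz₁ + κz₂ for all z ∈ ℝ². -/
import Mathlib


noncomputable def Theta (l : ℝ) (z : ℝ × ℝ) : ℝ :=
  if 0 < z.2 ∧ (1 + l) * z.1^2 < (1 - l) * z.2^2 then
    (1 + l) * z.1^2 / |z.2| + |z.2|
  else if z.2 < 0 ∧ (1 - l) * z.1^2 < (1 + l) * z.2^2 then
    (1 - l) * z.1^2 / |z.2| + |z.2|
  else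
    2 * |z.1| * Real.sqrt (1 - l^2) + l * z.2

lemma le_of_sq_le_sq' (u v : ℝ) (hv : 0 ≤ v) (h : u^2 ≤ v^2) : u ≤ v := by
  nlinarith [sq_nonneg (u - v), sq_nonneg (u + v)]

set_option maxHeartbeats 1000000 in
theorem Theta_subdifferential (κ ι l : ℝ)
    (hκ : κ ∈ Set.Icc (-1 : ℝ) 1) (hι : ι ∈ Set.Icc (-1 : ℝ) 1)
    (hl : l ∈ Set.Icc (-1 : ℝ) 1)
    (h : ι^2 ≤ min (1 - l^2) (min ((1 + κ) * (1 - l)) ((1 - κ) * (1 + l)))) :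
    ∀ z : ℝ × ℝ, Theta l z ≥ 2 * ι * z.1 + κ * z.2 := by
  obtain ⟨hκ1, hκ2⟩ := hκ
  obtain ⟨hl1, hl2⟩ := hl
  have h1 : ι^2 ≤ 1 - l^2 := le_trans h (min_le_left _ _)
  have h2 : ι^2 ≤ (1 + κ) * (1 - l) := le_trans h (le_trans (min_le_right _ _) (min_le_left _ _))
  have h3 : ι^2 ≤ (1 - κ) * (1 + l) := le_trans h (le_trans (min_le_right _ _) (min_le_right _ _))
  intro z
  obtain ⟨x, y⟩ := z
  simp only [Theta]
  split_ifs with hc1 hc2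
  · -- case 1 : y > 0
    obtain ⟨hy, hlt⟩ := hc1
    rw [abs_of_pos hy, ge_iff_le, ← sub_le_iff_le_add, le_div_iff₀ hy]
    rcases eq_or_lt_of_le (by linarith : (0:ℝ) ≤ 1 + l) with h0 | h0
    · have hι0 : ι = 0 := by
        have : ι^2 ≤ 0 := by nlinarith
        nlinarith [sq_nonneg ι]
      rw [hι0]
      nlinarith [sq_nonneg y, mul_nonneg (show (0:ℝ) ≤ 1 - κ by linarith) (sq_nonneg y)]
    · nlinarith [sq_nonneg ((1+l)*x - ι*y), mul_nonneg (sub_nonneg.2 h3) (sq_nonneg y)]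
  · -- case 2 : y < 0
    obtain ⟨hy, hlt⟩ := hc2
    have hy' : 0 < -y := by linarith
    rw [abs_of_neg hy, ge_iff_le, ← sub_le_iff_le_add, le_div_iff₀ hy']
    rcases eq_or_lt_of_le (by linarith : (0:ℝ) ≤ 1 - l) with h0 | h0
    · have hι0 : ι = 0 := by
        have : ι^2 ≤ 0 := by nlinarith
        nlinarith [sq_nonneg ι]
      rw [hι0]
      nlinarith [mul_nonneg (show (0:ℝ) ≤ 1 + κ by linarith) (sq_nonneg y)]
    · nlinarith [sq_nonneg ((1-l)*x + ι*y), mul_nonneg (sub_nonneg.2 h2) (sq_nonneg y)]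
  · -- case 3
    push_neg at hc1 hc2
    set a := Real.sqrt (1 + l) with ha
    set b := Real.sqrt (1 - l) with hb
    have ha0 : 0 ≤ a := Real.sqrt_nonneg _
    have hb0 : 0 ≤ b := Real.sqrt_nonneg _
    have ha2 : a^2 = 1 + l := Real.sq_sqrt (by linarith)
    have hb2 : b^2 = 1 - l := Real.sq_sqrt (by linarith)
    have hs : Real.sqrt (1 - l^2) = a * b := by
      rw [show (1:ℝ) - l^2 = (1+l)*(1-l) by ring, Real.sqrt_mul (by linarith)]
    rw [hs]
    have hιab : |ι| ≤ a * b := by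
      apply le_of_sq_le_sq' _ _ (mul_nonneg ha0 hb0)
      rw [sq_abs, mul_pow, ha2, hb2]; nlinarith
    have hιx : ι * x ≤ |ι| * |x| := by
      rw [← abs_mul]; exact le_abs_self _
    rcases le_or_gt 0 y with hy | hy
    · -- y ≥ 0 : constraint (1-l) y^2 ≤ (1+l) x^2
      have hcon : (1 - l) * y^2 ≤ (1 + l) * x^2 := by
        rcases eq_or_lt_of_le hy with h0 | h0
        · rw [← h0]; nlinarith [mul_nonneg (show (0:ℝ) ≤ 1 + l by linarith) (sq_nonneg x)]
        · exact hc1 h0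
      have hby : b * y ≤ a * |x| := by
        apply le_of_sq_le_sq' _ _ (mul_nonneg ha0 (abs_nonneg x))
        rw [mul_pow, mul_pow, ha2, hb2, sq_abs]; exact hcon
      rcases le_or_gt κ l with hkl | hkl
      · nlinarith [mul_nonneg (sub_nonneg.2 hιab) (abs_nonneg x),
          mul_nonneg (sub_nonneg.2 hkl) hy]
      · -- κ > l; split on l = 1
        rcases eq_or_lt_of_le hl2 with h0 | h0
        · linarith
        · have hbpos : 0 < b := Real.sqrt_pos.2 (by linarith)
          have hk1 : 2 * |ι| * b ≤ a * (2 - l - κ) := by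
            apply le_of_sq_le_sq' _ _ (mul_nonneg ha0 (by linarith))
            rw [mul_pow, mul_pow, mul_pow, ha2, hb2, sq_abs]
            nlinarith [mul_le_mul_of_nonneg_left h3 (show (0:ℝ) ≤ 1 - l by linarith),
              mul_nonneg (show (0:ℝ) ≤ 1 + l by linarith) (sq_nonneg (κ - l))]
          have key : b * (2*ι*x + κ*y) ≤ b * (2 * |x| * (a*b) + l*y) := by
            nlinarith [mul_nonneg (abs_nonneg x) (sub_nonneg.2 hk1),
              mul_nonneg (show (0:ℝ) ≤ κ - l by linarith) (sub_nonneg.2 hby),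
              mul_nonneg hb0 (sub_nonneg.2 hιx),
              show a * |x| * (b^2 - (1-l)) = 0 by rw [hb2]; ring]
          exact le_of_mul_le_mul_left key hbpos
    · -- y < 0 : constraint (1+l) y^2 ≤ (1-l) x^2
      have hcon : (1 + l) * y^2 ≤ (1 - l) * x^2 := hc2 hy
      have hay : a * (-y) ≤ b * |x| := by
        apply le_of_sq_le_sq' _ _ (mul_nonneg hb0 (abs_nonneg x))
        rw [mul_pow, mul_pow, ha2, hb2, sq_abs]; nlinarith
      rcases le_or_gt l κ with hkl | hkl
      · nlinarith [mul_nonneg (sub_nonneg.2 hιab) (abs_nonneg x),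
          mul_nonneg (sub_nonneg.2 hkl) (le_of_lt (neg_pos.2 hy))]
      · rcases eq_or_lt_of_le hl1 with h0 | h0
        · linarith
        · have hapos : 0 < a := Real.sqrt_pos.2 (by linarith)
          have hk2' : 2 * |ι| * a ≤ b * (2 + l + κ) := by
            apply le_of_sq_le_sq' _ _ (mul_nonneg hb0 (by linarith))
            rw [mul_pow, mul_pow, mul_pow, ha2, hb2, sq_abs]
            nlinarith [mul_le_mul_of_nonneg_left h2 (show (0:ℝ) ≤ 1 + l by linarith),
              mul_nonneg (show (0:ℝ) ≤ 1 - l by linarith) (sq_nonneg (κ - l))]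
          have key : a * (2*ι*x + κ*y) ≤ a * (2 * |x| * (a*b) + l*y) := by
            nlinarith [mul_nonneg (abs_nonneg x) (sub_nonneg.2 hk2'),
              mul_nonneg (show (0:ℝ) ≤ l - κ by linarith) (sub_nonneg.2 hay),
              mul_nonneg ha0 (sub_nonneg.2 hιx),
              show b * |x| * (a^2 - (1+l)) = 0 by rw [ha2]; ring]
          exact le_of_mul_le_mul_left key hapos
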